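/- Let (X1,Y1) and (X2,Y2) be independent pairs of discrete random variables, where X1 and X2 take values in {0,1} and have the same marginal distribution P_X, and Y1, Y2 take values in finite sets. Let U1 = X1 ⊕ X2 (addition in F_2) and U2 = X2. Then for every α ≥ 0 with α ≠ 1, H_α(U2 | (Y1,Y2,U1)) ≤ min{ H_α(X1|Y1), H_α(X2|Y2) }. -/

import Mathlib

/-!
The numerator `∑ p^α` of `H_α(U₂ | Y₁Y₂U₁)` is the product of those of `p₁` and `p₂`, because
`(u₂, y₁, y₂, u₁) ↦ (u₁ + u₂, y₁, u₂, y₂)` is a bijection and `t ↦ t^α` is multiplicative. So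
it suffices to compare denominators, one pair `(y₁, y₂)` at a time. For fixed `(y₁, y₂)`,
with `a = p₁(·, y₁)` and `b = p₂(·, y₂)`, the masses `a₀b₀ + a₁b₁`, `a₁b₀ + a₀b₁` of
`(U₁, y₁, y₂)` have the same sum as `b₀(a₀ + a₁)`, `b₁(a₀ + a₁)` and lie between them, and
`t ↦ t^α / (1 - α)` is concave on `[0, ∞)` (also at `α = 0`, where under `0^0 = 0` it is the
indicator of `t ≠ 0`). Summing the resulting two-point inequalities compares the denominators
in the direction that, after taking `log₂`, gives the bound.
-/

/-- `rpow0 a α = a ^ α` (real power) with the convention `0 ^ 0 = 0`,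
so that at `α = 0` sums of `rpow0` count support sizes. -/
noncomputable def rpow0 (a α : ℝ) : ℝ := if a = 0 then 0 else a ^ α

/-- Conditional Rényi entropy of order `α` (base-2 logarithm) of a joint
distribution `p` on `X × Y`:
`H_α(X|Y) = (1/(1-α)) * log₂ ((Σ_{x,y} p(x,y)^α) / (Σ_y P_Y(y)^α))`. -/
noncomputable def condRenyi {X Y : Type*} [Fintype X] [Fintype Y]
    (α : ℝ) (p : X × Y → ℝ) : ℝ :=
  (1 - α)⁻¹ * Real.logb 2
    ((∑ z : X × Y, rpow0 (p z) α) / (∑ y : Y, rpow0 (∑ x : X, p (x, y)) α))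

open Finset Set

lemma rpow0_nonneg {a : ℝ} (ha : 0 ≤ a) (α : ℝ) : 0 ≤ rpow0 a α := by
  unfold rpow0
  split_ifs
  · exact le_rfl
  · exact Real.rpow_nonneg ha α

lemma rpow0_pos {a : ℝ} (ha : 0 < a) (α : ℝ) : 0 < rpow0 a α := by
  rw [rpow0, if_neg ha.ne']
  exact Real.rpow_pos_of_pos ha α

lemma rpow0_mul {a b : ℝ} (ha : 0 ≤ a) (hb : 0 ≤ b) (α : ℝ) :
    rpow0 (a * b) α = rpow0 a α * rpow0 b α := by
  rcases ha.eq_or_lt with rfl | ha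
  · simp [rpow0]
  rcases hb.eq_or_lt with rfl | hb
  · simp [rpow0]
  simp only [rpow0, if_neg (mul_pos ha hb).ne', if_neg ha.ne', if_neg hb.ne',
    Real.mul_rpow ha.le hb.le]

lemma rpow0_eq_rpow {a α : ℝ} (hα : α ≠ 0) : rpow0 a α = a ^ α := by
  unfold rpow0
  split_ifs with h
  · rw [h, Real.zero_rpow hα]
  · rfl

lemma concaveOn_rpow0 {α : ℝ} (hα₀ : 0 ≤ α) (hα₁ : α ≤ 1) :
    ConcaveOn ℝ (Ici 0) (rpow0 · α) := by
  rcases hα₀.eq_or_lt with rfl | hα₀'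
  · refine ⟨convex_Ici 0, fun x hx y hy a b ha hb hab => ?_⟩
    have mul_rpow0_zero : ∀ {c t : ℝ}, c * t = 0 → c * rpow0 t 0 = 0 := by
      intro c t h
      rcases mul_eq_zero.1 h with rfl | rfl <;> simp [rpow0]
    have rpow0_zero_le_one : ∀ t, rpow0 t 0 ≤ 1 := by
      intro t
      unfold rpow0
      split_ifs <;> norm_num
    simp only [smul_eq_mul]
    by_cases h : a * x + b * y = 0
    · obtain ⟨hax, hby⟩ :=
        (add_eq_zero_iff_of_nonneg (mul_nonneg ha hx) (mul_nonneg hb hy)).1 h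
      rw [mul_rpow0_zero hax, mul_rpow0_zero hby, h]
      simp [rpow0]
    · rw [show rpow0 (a * x + b * y) 0 = 1 by simp [rpow0, h]]
      nlinarith [rpow0_zero_le_one x, rpow0_zero_le_one y]
  · simp only [rpow0_eq_rpow hα₀'.ne']
    exact Real.concaveOn_rpow hα₀ hα₁

lemma concaveOn_inv_one_sub_mul_rpow0 {α : ℝ} (hα₀ : 0 ≤ α) (hα₁ : α ≠ 1) :
    ConcaveOn ℝ (Ici 0) (fun t => (1 - α)⁻¹ * rpow0 t α) := by
  rcases hα₁.lt_or_gt with h | h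
  · exact (concaveOn_rpow0 hα₀ h.le).smul (inv_nonneg.2 (sub_nonneg.2 h.le))
  · have hc : 0 ≤ -(1 - α)⁻¹ := neg_nonneg.2 (inv_nonpos.2 (by linarith))
    simp only [rpow0_eq_rpow (show α ≠ 0 by linarith)]
    exact ((convexOn_rpow h.le).smul hc).neg.congr fun t _ => by simp

theorem ConcaveOn.map_add_map_le_of_mem_segment {𝕜 E β : Type*} [Ring 𝕜] [PartialOrder 𝕜]
    [AddCommGroup E] [Module 𝕜 E] [AddCommMonoid β] [PartialOrder β] [IsOrderedAddMonoid β]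
    [Module 𝕜 β] {s : Set E} {f : E → β} (hf : ConcaveOn 𝕜 s f) {a b x y : E} (ha : a ∈ s)
    (hb : b ∈ s) (hx : x ∈ segment 𝕜 a b) (hxy : x + y = a + b) :
    f a + f b ≤ f x + f y := by
  obtain ⟨μ, ν, hμ, hν, hμν, rfl⟩ := hx
  have hy : y = ν • a + μ • b := by
    have : y = (μ + ν) • a + (μ + ν) • b - (μ • a + ν • b) := by
      rw [hμν, one_smul, one_smul]
      exact eq_sub_of_add_eq' hxy
    rw [this, add_smul, add_smul]
    abel
  calc f a + f b = (μ • f a + ν • f b) + (ν • f a + μ • f b) := by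
        rw [add_add_add_comm, ← add_smul, ← add_smul, add_comm ν, hμν, one_smul, one_smul]
    _ ≤ f (μ • a + ν • b) + f y := by
        rw [hy]
        exact add_le_add (hf.2 ha hb hμ hν hμν) (hf.2 ha hb hν hμ (by rw [add_comm, hμν]))

lemma mul_add_mul_mem_uIcc {c d : ℝ} (a b : ℝ) (hc : 0 ≤ c) (hd : 0 ≤ d) :
    a * c + b * d ∈ uIcc (a * (c + d)) (b * (c + d)) := by
  rcases le_total a b with h | h
  · exact mem_uIcc.2 (Or.inl ⟨by nlinarith, by nlinarith⟩)
  · exact mem_uIcc.2 (Or.inr ⟨by nlinarith, by nlinarith⟩)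

lemma ConcaveOn.map_mul_add_le {f : ℝ → ℝ} (hf : ConcaveOn ℝ (Ici 0) f) {a b c d : ℝ}
    (ha : 0 ≤ a) (hb : 0 ≤ b) (hc : 0 ≤ c) (hd : 0 ≤ d) :
    f (a * (c + d)) + f (b * (c + d)) ≤ f (a * c + b * d) + f (a * d + b * c) :=
  hf.map_add_map_le_of_mem_segment (mem_Ici.2 (by positivity)) (mem_Ici.2 (by positivity))
    (by rw [segment_eq_uIcc]; exact mul_add_mul_mem_uIcc a b hc hd) (by ring)

lemma sum_zmod_two {M : Type*} [AddCommMonoid M] (g : ZMod 2 → M) : ∑ x, g x = g 0 + g 1 :=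
  Fin.sum_univ_two g

lemma ConcaveOn.sum_map_mul_sum_left_le_sum_map_conv {f : ℝ → ℝ} (hf : ConcaveOn ℝ (Ici 0) f)
    {a b : ZMod 2 → ℝ} (ha : ∀ x, 0 ≤ a x) (hb : ∀ x, 0 ≤ b x) :
    ∑ x, f (b x * ∑ x', a x') ≤ ∑ u, f (∑ v, a (u + v) * b v) := by
  simp only [sum_zmod_two, zero_add, add_zero, show (1 : ZMod 2) + 1 = 0 from rfl]
  convert hf.map_mul_add_le (hb 0) (hb 1) (ha 0) (ha 1) using 3 <;> ring

lemma ConcaveOn.sum_map_mul_sum_right_le_sum_map_conv {f : ℝ → ℝ} (hf : ConcaveOn ℝ (Ici 0) f)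
    {a b : ZMod 2 → ℝ} (ha : ∀ x, 0 ≤ a x) (hb : ∀ x, 0 ≤ b x) :
    ∑ x, f (a x * ∑ x', b x') ≤ ∑ u, f (∑ v, a (u + v) * b v) := by
  simp only [sum_zmod_two, zero_add, add_zero, show (1 : ZMod 2) + 1 = 0 from rfl]
  convert hf.map_mul_add_le (ha 0) (ha 1) (hb 0) (hb 1) using 3
  ring

lemma sum_rpow0_pos {ι : Type*} [Fintype ι] {f : ι → ℝ} (hf : ∀ i, 0 ≤ f i)
    (h : 0 < ∑ i, f i) (α : ℝ) : 0 < ∑ i, rpow0 (f i) α := by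
  obtain ⟨i, -, hi⟩ := exists_lt_of_sum_lt (by simpa using h : ∑ _i, (0 : ℝ) < ∑ i, f i)
  exact sum_pos' (fun j _ => rpow0_nonneg (hf j) α) ⟨i, mem_univ i, rpow0_pos hi α⟩

section RenyiSums

variable {X Y Y' : Type*} [Fintype X] [Fintype Y] [Fintype Y']

noncomputable def renyiJointSum (α : ℝ) (p : X × Y → ℝ) : ℝ := ∑ z, rpow0 (p z) α

noncomputable def renyiMarginalSum (α : ℝ) (p : X × Y → ℝ) : ℝ := ∑ y, rpow0 (∑ x, p (x, y)) α

lemma condRenyi_eq (α : ℝ) (p : X × Y → ℝ) :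
    condRenyi α p = (1 - α)⁻¹ * Real.logb 2 (renyiJointSum α p / renyiMarginalSum α p) :=
  rfl

lemma renyiJointSum_pos {p : X × Y → ℝ} (hp : ∀ z, 0 ≤ p z) (h : 0 < ∑ z, p z) (α : ℝ) :
    0 < renyiJointSum α p :=
  sum_rpow0_pos hp h α

lemma renyiMarginalSum_pos {p : X × Y → ℝ} (hp : ∀ z, 0 ≤ p z) (h : 0 < ∑ z, p z) (α : ℝ) :
    0 < renyiMarginalSum α p :=
  sum_rpow0_pos (fun y => sum_nonneg fun x _ => hp (x, y))
    (by rwa [← Fintype.sum_prod_type_right]) α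

lemma renyiJointSum_mul_renyiMarginalSum {q : X × Y' → ℝ} {p : X × Y → ℝ}
    (hq : ∀ z, 0 ≤ q z) (hp : ∀ z, 0 ≤ p z) (α : ℝ) :
    renyiJointSum α q * renyiMarginalSum α p =
      ∑ y, ∑ y', ∑ x, rpow0 (q (x, y') * ∑ x', p (x', y)) α := by
  rw [renyiJointSum, renyiMarginalSum, mul_sum]
  refine sum_congr rfl fun y _ => ?_
  rw [Fintype.sum_prod_type_right, sum_mul]
  refine sum_congr rfl fun y' _ => ?_
  rw [sum_mul]
  exact sum_congr rfl fun x _ => (rpow0_mul (hq _) (sum_nonneg fun x' _ => hp _) α).symm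

lemma mul_logb_le_mul_logb_of_mul_le {b c u v : ℝ} (hb : 1 < b) (hu : 0 < u) (hv : 0 < v)
    (h : c * u ≤ c * v) : c * Real.logb b u ≤ c * Real.logb b v := by
  rcases lt_trichotomy c 0 with hc | rfl | hc
  · exact (mul_le_mul_left_of_neg hc).2 ((Real.logb_le_logb hb hv hu).2
      ((mul_le_mul_left_of_neg hc).1 h))
  · simp
  · exact mul_le_mul_of_nonneg_left
      (Real.logb_le_logb_of_le hb hu (le_of_mul_le_mul_left h hc)) hc.le

lemma condRenyi_le_of_renyiJointSum_eq_mul {X' Y'' : Type*} [Fintype X'] [Fintype Y'']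
    {p : X × Y → ℝ} {q : X' × Y'' → ℝ} {α K : ℝ} (hK : 0 < K) (hNp : 0 < renyiJointSum α p)
    (hDp : 0 < renyiMarginalSum α p) (hDq : 0 < renyiMarginalSum α q)
    (hN : renyiJointSum α q = renyiJointSum α p * K)
    (hD : (1 - α)⁻¹ * (K * renyiMarginalSum α p) ≤ (1 - α)⁻¹ * renyiMarginalSum α q) :
    condRenyi α q ≤ condRenyi α p := by
  rw [condRenyi_eq, condRenyi_eq, hN]
  refine mul_logb_le_mul_logb_of_mul_le one_lt_two (by positivity) (by positivity) ?_
  set Np := renyiJointSum α p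
  set Dp := renyiMarginalSum α p
  set Dq := renyiMarginalSum α q
  calc (1 - α)⁻¹ * (Np * K / Dq) = Np / (Dp * Dq) * ((1 - α)⁻¹ * (K * Dp)) := by field_simp
    _ ≤ Np / (Dp * Dq) * ((1 - α)⁻¹ * Dq) := mul_le_mul_of_nonneg_left hD (by positivity)
    _ = (1 - α)⁻¹ * (Np / Dp) := by field_simp

end RenyiSums

section Polar

variable {G Y₁ Y₂ : Type*}

/-- The joint law of `(U₂, (Y₁, Y₂, U₁))` when `(X₁, Y₁) ∼ p₁` and `(X₂, Y₂) ∼ p₂` are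
independent, `U₁ = X₁ + X₂` and `U₂ = X₂`. -/
def polarMinus [Add G] (p₁ : G × Y₁ → ℝ) (p₂ : G × Y₂ → ℝ) : G × (Y₁ × Y₂ × G) → ℝ :=
  fun z => p₁ (z.2.2.2 + z.1, z.2.1) * p₂ (z.1, z.2.2.1)

variable (G Y₁ Y₂) in
def polarEquiv [AddGroup G] : G × (Y₁ × Y₂ × G) ≃ (G × Y₁) × (G × Y₂) where
  toFun z := ((z.2.2.2 + z.1, z.2.1), (z.1, z.2.2.1))
  invFun w := (w.2.1, (w.1.2, w.2.2, w.1.1 - w.2.1))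
  left_inv z := by simp
  right_inv w := by simp

variable [Fintype G] [Fintype Y₁] [Fintype Y₂]

lemma sum_polarMinus [AddGroup G] (p₁ : G × Y₁ → ℝ) (p₂ : G × Y₂ → ℝ) :
    ∑ z, polarMinus p₁ p₂ z = (∑ z, p₁ z) * ∑ z, p₂ z := by
  rw [sum_mul_sum, ← Fintype.sum_prod_type']
  exact Fintype.sum_equiv (polarEquiv G Y₁ Y₂) _ _ fun _ => rfl

lemma renyiJointSum_polarMinus [AddGroup G] {p₁ : G × Y₁ → ℝ} {p₂ : G × Y₂ → ℝ}
    (h₁ : ∀ z, 0 ≤ p₁ z) (h₂ : ∀ z, 0 ≤ p₂ z) (α : ℝ) :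
    renyiJointSum α (polarMinus p₁ p₂) = renyiJointSum α p₁ * renyiJointSum α p₂ := by
  rw [renyiJointSum, renyiJointSum, renyiJointSum, sum_mul_sum, ← Fintype.sum_prod_type']
  exact Fintype.sum_equiv (polarEquiv G Y₁ Y₂) _ _ fun _ => rpow0_mul (h₁ _) (h₂ _) α

lemma renyiMarginalSum_polarMinus [Add G] (p₁ : G × Y₁ → ℝ) (p₂ : G × Y₂ → ℝ) (α : ℝ) :
    renyiMarginalSum α (polarMinus p₁ p₂) =
      ∑ y₁, ∑ y₂, ∑ u, rpow0 (∑ v, p₁ (u + v, y₁) * p₂ (v, y₂)) α := by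
  simp only [renyiMarginalSum, Fintype.sum_prod_type]
  rfl

end Polar

section BinaryPolar

variable {Y₁ Y₂ : Type*} [Fintype Y₁] [Fintype Y₂] {p₁ : ZMod 2 × Y₁ → ℝ} {p₂ : ZMod 2 × Y₂ → ℝ}
  {α : ℝ}

lemma inv_one_sub_mul_le_renyiMarginalSum_polarMinus_left (h₁ : ∀ z, 0 ≤ p₁ z)
    (h₂ : ∀ z, 0 ≤ p₂ z) (hα₀ : 0 ≤ α) (hα₁ : α ≠ 1) :
    (1 - α)⁻¹ * (renyiJointSum α p₂ * renyiMarginalSum α p₁) ≤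
      (1 - α)⁻¹ * renyiMarginalSum α (polarMinus p₁ p₂) := by
  have hψ := concaveOn_inv_one_sub_mul_rpow0 hα₀ hα₁
  rw [renyiJointSum_mul_renyiMarginalSum h₂ h₁, renyiMarginalSum_polarMinus]
  simp only [mul_sum]
  exact sum_le_sum fun y₁ _ => sum_le_sum fun y₂ _ => by
    simpa only [mul_sum] using
      hψ.sum_map_mul_sum_left_le_sum_map_conv (fun x => h₁ (x, y₁)) (fun x => h₂ (x, y₂))

lemma inv_one_sub_mul_le_renyiMarginalSum_polarMinus_right (h₁ : ∀ z, 0 ≤ p₁ z)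
    (h₂ : ∀ z, 0 ≤ p₂ z) (hα₀ : 0 ≤ α) (hα₁ : α ≠ 1) :
    (1 - α)⁻¹ * (renyiJointSum α p₁ * renyiMarginalSum α p₂) ≤
      (1 - α)⁻¹ * renyiMarginalSum α (polarMinus p₁ p₂) := by
  have hψ := concaveOn_inv_one_sub_mul_rpow0 hα₀ hα₁
  rw [renyiJointSum_mul_renyiMarginalSum h₁ h₂, renyiMarginalSum_polarMinus, sum_comm]
  simp only [mul_sum]
  exact sum_le_sum fun y₁ _ => sum_le_sum fun y₂ _ => by
    simpa only [mul_sum] using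
      hψ.sum_map_mul_sum_right_le_sum_map_conv (fun x => h₁ (x, y₁)) (fun x => h₂ (x, y₂))

end BinaryPolar

theorem renyi_polar_minus_general
    {Y1 Y2 : Type*} [Fintype Y1] [Fintype Y2]
    (p1 : ZMod 2 × Y1 → ℝ) (p2 : ZMod 2 × Y2 → ℝ)
    (h1 : ∀ z, 0 ≤ p1 z) (h2 : ∀ z, 0 ≤ p2 z)
    (hs1 : ∑ z, p1 z = 1) (hs2 : ∑ z, p2 z = 1)
    (α : ℝ) (hα0 : 0 ≤ α) (hα1 : α ≠ 1) :
    condRenyi α (fun z : ZMod 2 × (Y1 × Y2 × ZMod 2) =>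
        p1 (z.2.2.2 + z.1, z.2.1) * p2 (z.1, z.2.2.1))
      ≤ min (condRenyi α p1) (condRenyi α p2) := by
  have hp1 : 0 < ∑ z, p1 z := hs1 ▸ one_pos
  have hp2 : 0 < ∑ z, p2 z := hs2 ▸ one_pos
  have hq : 0 < ∑ z, polarMinus p1 p2 z := by
    rw [sum_polarMinus]
    positivity
  have hDq := renyiMarginalSum_pos (fun _ => mul_nonneg (h1 _) (h2 _)) hq α
  refine le_min ?_ ?_
  · exact condRenyi_le_of_renyiJointSum_eq_mul (renyiJointSum_pos h2 hp2 α)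
      (renyiJointSum_pos h1 hp1 α) (renyiMarginalSum_pos h1 hp1 α) hDq
      (renyiJointSum_polarMinus h1 h2 α)
      (inv_one_sub_mul_le_renyiMarginalSum_polarMinus_left h1 h2 hα0 hα1)
  · exact condRenyi_le_of_renyiJointSum_eq_mul (renyiJointSum_pos h1 hp1 α)
      (renyiJointSum_pos h2 hp2 α) (renyiMarginalSum_pos h2 hp2 α) hDq
      ((renyiJointSum_polarMinus h1 h2 α).trans (mul_comm _ _))
      (inv_one_sub_mul_le_renyiMarginalSum_polarMinus_right h1 h2 hα0 hα1)

/-- for the basic polar transform `U1 = X1 ⊕ X2`, `U2 = X2` applied to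
independent pairs `(X1,Y1)`, `(X2,Y2)` with the same input marginal `P_X`,
`H_α(U2 | (Y1,Y2,U1)) ≤ min (H_α(X1|Y1)) (H_α(X2|Y2))` for all `α ≥ 0`, `α ≠ 1`.
The joint distribution of `(U2,(Y1,Y2,U1))` is
`(u2,(y1,y2,u1)) ↦ p1(u1+u2, y1) * p2(u2, y2)`. -/
theorem renyi_polar_minus
    {Y1 Y2 : Type*} [Fintype Y1] [Fintype Y2]
    (p1 : ZMod 2 × Y1 → ℝ) (p2 : ZMod 2 × Y2 → ℝ)
    (h1 : ∀ z, 0 ≤ p1 z) (h2 : ∀ z, 0 ≤ p2 z)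
    (hs1 : ∑ z, p1 z = 1) (hs2 : ∑ z, p2 z = 1)
    (hmarg : ∀ x : ZMod 2, ∑ y1, p1 (x, y1) = ∑ y2, p2 (x, y2))
    (α : ℝ) (hα0 : 0 ≤ α) (hα1 : α ≠ 1) :
    condRenyi α (fun z : ZMod 2 × (Y1 × Y2 × ZMod 2) =>
        p1 (z.2.2.2 + z.1, z.2.1) * p2 (z.1, z.2.2.1))
      ≤ min (condRenyi α p1) (condRenyi α p2) :=
  renyi_polar_minus_general p1 p2 h1 h2 hs1 hs2 α hα0 hα1
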